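/- Separation-based coding fails for the example SOMARC (gap between source entropy and the cut-set/separation bound): Let (S1, S2) be {0,1}²-valued with P(S1=0,S2=0) = P(S1=0,S2=1) = P(S1=1,S2=1) = 1/3. For the deterministic channel with binary inputs X1, X2, X3, relay output Y3 = X1 ⊕ X2, and destination outputs YR = X3, YS = X1 + X2, one has: for every triple of independent {0,1}-valued random variables X1, X2, X3, min{ I(X1,X2; Y3,YS), I(X3; YR) + I(X1,X2; YS) } ≤ (3/2)·log 2, and H(S1,S2) = log 3 > (3/2)·log 2. Hence H(S1,S2) strictly exceeds the maximum over product input distributions p(x1)p(x2)p(x3) of min{ I(X1,X2; Y3,YS), I(X3; YR) + I(X1,X2; YS) }. -/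
import Mathlib


open scoped BigOperators

/-- A probability mass function on a finite type. -/
def IsPmf {α : Type*} [Fintype α] (p : α → ℝ) : Prop :=
  (∀ a, 0 ≤ p a) ∧ ∑ a, p a = 1

/-- Shannon entropy (natural logarithm) of the push-forward of `μ` under `X`. -/
noncomputable def entropyOf {Ω α : Type*} [Fintype Ω] [Fintype α] [DecidableEq α]
    (μ : Ω → ℝ) (X : Ω → α) : ℝ :=
  ∑ a : α, Real.negMulLog (∑ ω : Ω, if X ω = a then μ ω else 0)

/-- Conditional Shannon entropy `H(X | Y)` under `μ`. -/
noncomputable def condEntropyOf {Ω α β : Type*} [Fintype Ω] [Fintype α] [Fintype β]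
    [DecidableEq α] [DecidableEq β] (μ : Ω → ℝ) (X : Ω → α) (Y : Ω → β) : ℝ :=
  entropyOf μ (fun ω => (X ω, Y ω)) - entropyOf μ Y

/-- Mutual information `I(X ; Y)` under `μ`. -/
noncomputable def mutualInfoOf {Ω α β : Type*} [Fintype Ω] [Fintype α] [Fintype β]
    [DecidableEq α] [DecidableEq β] (μ : Ω → ℝ) (X : Ω → α) (Y : Ω → β) : ℝ :=
  entropyOf μ X + entropyOf μ Y - entropyOf μ (fun ω => (X ω, Y ω))

/-- Conditional mutual information `I(X ; Y | Z)` under `μ`. -/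
noncomputable def condMutualInfoOf {Ω α β γ : Type*} [Fintype Ω] [Fintype α] [Fintype β]
    [Fintype γ] [DecidableEq α] [DecidableEq β] [DecidableEq γ]
    (μ : Ω → ℝ) (X : Ω → α) (Y : Ω → β) (Z : Ω → γ) : ℝ :=
  entropyOf μ (fun ω => (X ω, Z ω)) + entropyOf μ (fun ω => (Y ω, Z ω))
    - entropyOf μ (fun ω => (X ω, Y ω, Z ω)) - entropyOf μ Z

/-- The integer sum of two bits, as an element of `{0,1,2}`. -/
def sumFin (a b : Fin 2) : Fin 3 :=
  ⟨a.val + b.val, by have := a.isLt; have := b.isLt; omega⟩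

/-- The random variables `X` and `Y` are independent under the pmf `μ`. -/
def IndepPair {Ω α β : Type*} [Fintype Ω] [DecidableEq α] [DecidableEq β]
    (μ : Ω → ℝ) (X : Ω → α) (Y : Ω → β) : Prop :=
  ∀ (a : α) (b : β),
    (∑ ω : Ω, if X ω = a ∧ Y ω = b then μ ω else 0) =
      (∑ ω : Ω, if X ω = a then μ ω else 0) * (∑ ω : Ω, if Y ω = b then μ ω else 0)

/-- The random variables `X`, `Y`, `Z` are mutually independent under the pmf `μ`
(their joint pmf is the product of the three marginals). -/
def IndepTriple {Ω α β γ : Type*} [Fintype Ω] [DecidableEq α] [DecidableEq β] [DecidableEq γ]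
    (μ : Ω → ℝ) (X : Ω → α) (Y : Ω → β) (Z : Ω → γ) : Prop :=
  ∀ (a : α) (b : β) (c : γ),
    (∑ ω : Ω, if X ω = a ∧ Y ω = b ∧ Z ω = c then μ ω else 0) =
      (∑ ω : Ω, if X ω = a then μ ω else 0) * (∑ ω : Ω, if Y ω = b then μ ω else 0) *
        (∑ ω : Ω, if Z ω = c then μ ω else 0)

/-- The example source distribution: `P(0,0) = P(0,1) = P(1,1) = 1/3`, `P(1,0) = 0`. -/
noncomputable def exmpSrc : Fin 2 × Fin 2 → ℝ :=
  fun p => if p = (1, 0) then 0 else 1 / 3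

/-- The cut-set/separation quantity of the example SOMARC:
`min { I(X1,X2 ; Y3,YS), I(X3 ; YR) + I(X1,X2 ; YS) }` where `Y3 = X1 ⊕ X2`,
`YS = X1 + X2` (integer sum) and `YR = X3`. -/
noncomputable def somarcMinMI (Ω : Type) [Fintype Ω] (μ : Ω → ℝ)
    (X1 X2 X3 : Ω → Fin 2) : ℝ :=
  min
    (mutualInfoOf μ (fun ω => (X1 ω, X2 ω))
      (fun ω => (X1 ω + X2 ω, sumFin (X1 ω) (X2 ω))))
    (mutualInfoOf μ X3 (fun ω => X3 ω) +
      mutualInfoOf μ (fun ω => (X1 ω, X2 ω)) (fun ω => sumFin (X1 ω) (X2 ω)))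


section SomarcHelpers

/-! ### Scalar inequalities -/

private lemma somarc_two_log_le {y : ℝ} (hy : 1 ≤ y) : 2 * Real.log y ≤ y - y⁻¹ := by
  have h0 : (0:ℝ) < y := by linarith
  have h := Real.self_le_sinh_iff.mpr (Real.log_nonneg hy)
  rw [Real.sinh_log h0] at h
  linarith

private lemma somarc_xlogx_lb {x : ℝ} (hx0 : 0 ≤ x) (hx1 : x ≤ 1) :
    (x^2 - 1)/2 ≤ x * Real.log x := by
  rcases eq_or_lt_of_le hx0 with h|h
  · rw [← h]; norm_num
  · have hy : 1 ≤ x⁻¹ := (one_le_inv₀ h).2 hx1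
    have h2 := somarc_two_log_le hy
    rw [Real.log_inv, inv_inv] at h2
    nlinarith [mul_le_mul_of_nonneg_left h2 h.le, mul_inv_cancel₀ h.ne']

private lemma somarc_one_add_mul_log_lb {t : ℝ} (h0 : 0 ≤ t) :
    t ≤ (1+t) * Real.log (1+t) := by
  have h1 : (0:ℝ) < 1 + t := by linarith
  have h2 := Real.log_le_sub_one_of_pos (inv_pos.mpr h1)
  rw [Real.log_inv] at h2
  nlinarith [mul_le_mul_of_nonneg_left h2 h1.le, mul_inv_cancel₀ h1.ne']

private lemma somarc_pinsker_lite {t : ℝ} (h0 : 0 ≤ t) (h1 : t ≤ 1) :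
    t^2/2 ≤ (1+t) * Real.log (1+t) + (1-t) * Real.log (1-t) := by
  have ha := somarc_one_add_mul_log_lb h0
  have hb := somarc_xlogx_lb (x := 1-t) (by linarith) (by linarith)
  nlinarith

private lemma somarc_binent_le {s : ℝ} (h0 : 0 ≤ s) (h1 : s ≤ 1) :
    Real.negMulLog s + Real.negMulLog (1-s) ≤ Real.log 2 - (2*s-1)^2/4 := by
  have hl2 : (0.6931471803 : ℝ) < Real.log 2 := Real.log_two_gt_d9
  rcases eq_or_lt_of_le h0 with h|h
  · rw [← h]; norm_num [Real.negMulLog_zero]; nlinarith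
  rcases eq_or_lt_of_le h1 with h'|h'
  · rw [h']; norm_num [Real.negMulLog_zero]; nlinarith
  have hs : (0:ℝ) < 1 - s := by linarith
  have e1 : Real.negMulLog s = -s * Real.log s := rfl
  have e2 : Real.negMulLog (1-s) = -(1-s) * Real.log (1-s) := rfl
  by_cases hc : s ≤ 1/2
  · have hp := somarc_pinsker_lite (t := 1 - 2*s) (by linarith) (by linarith)
    rw [show (1:ℝ) + (1-2*s) = 2*(1-s) by ring, show (1:ℝ) - (1-2*s) = 2*s by ring,
      Real.log_mul two_ne_zero hs.ne', Real.log_mul two_ne_zero h.ne'] at hp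
    nlinarith
  · have hp := somarc_pinsker_lite (t := 2*s - 1) (by linarith) (by linarith)
    rw [show (1:ℝ) + (2*s-1) = 2*s by ring, show (1:ℝ) - (2*s-1) = 2*(1-s) by ring,
      Real.log_mul two_ne_zero hs.ne', Real.log_mul two_ne_zero h.ne'] at hp
    nlinarith

private lemma somarc_gibbs_term {x y : ℝ} (hx : 0 ≤ x) (hy : 0 < y) :
    Real.negMulLog x ≤ y - x - x * Real.log y := by
  rcases eq_or_lt_of_le hx with h|h
  · rw [← h]; simpa using hy.le
  · have hlog := Real.log_le_sub_one_of_pos (div_pos hy h)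
    rw [Real.log_div hy.ne' h.ne'] at hlog
    have h2 := mul_le_mul_of_nonneg_left hlog h.le
    have h3 : x * (y / x) = y := by field_simp
    rw [Real.negMulLog]
    nlinarith

private lemma somarc_keyA {p q : ℝ} (hp0 : 0 ≤ p) (hp1 : p ≤ 1) (hq0 : 0 ≤ q) (hq1 : q ≤ 1) :
    Real.negMulLog ((1-p)*(1-q)) + Real.negMulLog (p*(1-q)+(1-p)*q) + Real.negMulLog (p*q)
      ≤ 3/2 * Real.log 2 := by
  have hl2 : (0.6931471803 : ℝ) < Real.log 2 := Real.log_two_gt_d9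
  have hl2' : Real.log 2 ≤ 1 := by
    have := Real.log_le_sub_one_of_pos (by norm_num : (0:ℝ) < 2); linarith
  set s : ℝ := (p+q)/2 with hs
  have hs0 : 0 ≤ s := by rw [hs]; linarith
  have hs1 : s ≤ 1 := by rw [hs]; linarith
  rcases eq_or_lt_of_le hs0 with h0|h0
  · have hp : p = 0 := by rw [hs] at h0; linarith
    have hq : q = 0 := by rw [hs] at h0; linarith
    rw [hp, hq]; norm_num; nlinarith
  rcases eq_or_lt_of_le hs1 with h1|h1
  · have hp : p = 1 := by rw [hs] at h1; linarith
    have hq : q = 1 := by rw [hs] at h1; linarith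
    rw [hp, hq]; norm_num; nlinarith
  have h1s : (0:ℝ) < 1 - s := by linarith
  have g1 := somarc_gibbs_term (x := (1-p)*(1-q)) (y := (1-s)^2)
    (by nlinarith) (by positivity)
  have g2 := somarc_gibbs_term (x := p*(1-q)+(1-p)*q) (y := 2*s*(1-s))
    (by nlinarith) (by positivity)
  have g3 := somarc_gibbs_term (x := p*q) (y := s^2) (by positivity) (by positivity)
  have e1 : Real.log ((1-s)^2) = 2 * Real.log (1-s) := by
    rw [sq, Real.log_mul h1s.ne' h1s.ne']; ring
  have e2 : Real.log (2*s*(1-s)) = Real.log 2 + Real.log s + Real.log (1-s) := by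
    rw [Real.log_mul (by positivity) h1s.ne', Real.log_mul two_ne_zero h0.ne']
  have e3 : Real.log (s^2) = 2 * Real.log s := by
    rw [sq, Real.log_mul h0.ne' h0.ne']; ring
  rw [e1] at g1; rw [e2] at g2; rw [e3] at g3
  have hsum : Real.negMulLog ((1-p)*(1-q)) + Real.negMulLog (p*(1-q)+(1-p)*q)
      + Real.negMulLog (p*q)
      ≤ 2 * (Real.negMulLog s + Real.negMulLog (1-s))
        - (p*(1-q)+(1-p)*q) * Real.log 2 := by
    have en1 : Real.negMulLog s = -s * Real.log s := rfl
    have en2 : Real.negMulLog (1-s) = -(1-s) * Real.log (1-s) := rfl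
    rw [en1, en2]
    have key : ((1-s)^2 - (1-p)*(1-q) - ((1-p)*(1-q)) * (2 * Real.log (1-s)))
        + (2*s*(1-s) - (p*(1-q)+(1-p)*q)
            - (p*(1-q)+(1-p)*q) * (Real.log 2 + Real.log s + Real.log (1-s)))
        + (s^2 - p*q - (p*q) * (2 * Real.log s))
        = 2 * (-s * Real.log s + -(1-s) * Real.log (1-s))
          - (p*(1-q)+(1-p)*q) * Real.log 2 := by
      rw [hs]; ring
    linarith
  have hbin := somarc_binent_le hs0 hs1
  have hb : 2*s*(1-s) ≤ p*(1-q)+(1-p)*q := by rw [hs]; nlinarith [sq_nonneg (p-q)]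
  have hbT : (2*s*(1-s)) * Real.log 2 ≤ (p*(1-q)+(1-p)*q) * Real.log 2 :=
    mul_le_mul_of_nonneg_right hb (by linarith)
  nlinarith [mul_nonneg (sq_nonneg (2*s-1)) (by linarith : (0:ℝ) ≤ 1 - Real.log 2)]

/-! ### Entropy plumbing -/

/-- The pushforward pmf of `μ` under `X`. -/
noncomputable def somarcPm {Ω α : Type*} [Fintype Ω] [DecidableEq α]
    (μ : Ω → ℝ) (X : Ω → α) (a : α) : ℝ := ∑ ω : Ω, if X ω = a then μ ω else 0

variable {Ω α β : Type*} [Fintype Ω] [Fintype α] [Fintype β] [DecidableEq α] [DecidableEq β]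

private lemma somarc_entropyOf_eq (μ : Ω → ℝ) (X : Ω → α) :
    entropyOf μ X = ∑ a : α, Real.negMulLog (somarcPm μ X a) := rfl

private lemma somarc_pm_sum (μ : Ω → ℝ) (h : IsPmf μ) (X : Ω → α) :
    ∑ a : α, somarcPm μ X a = 1 := by
  unfold somarcPm
  rw [Finset.sum_comm]
  simpa [Finset.sum_ite_eq] using h.2

omit [Fintype α] in
private lemma somarc_pm_nonneg (μ : Ω → ℝ) (h : IsPmf μ) (X : Ω → α) (a : α) :
    0 ≤ somarcPm μ X a :=
  Finset.sum_nonneg fun ω _ => by by_cases hx : X ω = a <;> simp [hx, h.1 ω]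

omit [Fintype α] in
private lemma somarc_pm_le_one (μ : Ω → ℝ) (h : IsPmf μ) (X : Ω → α) (a : α) :
    somarcPm μ X a ≤ 1 := by
  calc somarcPm μ X a ≤ ∑ ω : Ω, μ ω := Finset.sum_le_sum fun ω _ => by
        by_cases hx : X ω = a <;> simp [hx, h.1 ω]
    _ = 1 := h.2

private lemma somarc_entropy_nonneg (μ : Ω → ℝ) (h : IsPmf μ) (X : Ω → α) :
    0 ≤ entropyOf μ X := by
  rw [somarc_entropyOf_eq]
  exact Finset.sum_nonneg fun a _ =>
    Real.negMulLog_nonneg (somarc_pm_nonneg μ h X a) (somarc_pm_le_one μ h X a)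

private lemma somarc_entropy_comp_inj (μ : Ω → ℝ) (X : Ω → α) (g : α → β)
    (hg : Function.Injective g) :
    entropyOf μ (fun ω => g (X ω)) = entropyOf μ X := by
  classical
  unfold entropyOf
  calc ∑ b : β, Real.negMulLog (∑ ω : Ω, if g (X ω) = b then μ ω else 0)
      = ∑ b ∈ Finset.univ.image g,
          Real.negMulLog (∑ ω : Ω, if g (X ω) = b then μ ω else 0) := by
        refine (Finset.sum_subset (Finset.subset_univ _) ?_).symm
        intro b _ hb
        have hz : (∑ ω : Ω, if g (X ω) = b then μ ω else 0) = 0 := by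
          apply Finset.sum_eq_zero; intro ω _
          have : g (X ω) ≠ b := fun h => hb (h ▸ Finset.mem_image_of_mem g (Finset.mem_univ _))
          simp [this]
        rw [hz, Real.negMulLog_zero]
    _ = ∑ a : α, Real.negMulLog (∑ ω : Ω, if g (X ω) = g a then μ ω else 0) :=
        Finset.sum_image (fun a _ b _ h => hg h)
    _ = ∑ a : α, Real.negMulLog (∑ ω : Ω, if X ω = a then μ ω else 0) := by
        refine Finset.sum_congr rfl fun a _ => ?_
        congr 1
        exact Finset.sum_congr rfl fun ω _ => by simp [hg.eq_iff]

private lemma somarc_pair_of_triple (μ : Ω → ℝ) (X1 X2 X3 : Ω → Fin 2)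
    (hs3 : ∑ c : Fin 2, somarcPm μ X3 c = 1)
    (hind : IndepTriple μ X1 X2 X3) (a b : Fin 2) :
    (∑ ω : Ω, if X1 ω = a ∧ X2 ω = b then μ ω else 0) = somarcPm μ X1 a * somarcPm μ X2 b := by
  have hswap : (∑ ω : Ω, if X1 ω = a ∧ X2 ω = b then μ ω else 0)
      = ∑ c : Fin 2, ∑ ω : Ω, if X1 ω = a ∧ X2 ω = b ∧ X3 ω = c then μ ω else 0 := by
    rw [Finset.sum_comm]
    refine Finset.sum_congr rfl fun ω _ => ?_
    by_cases h : X1 ω = a ∧ X2 ω = b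
    · simp [h, Finset.sum_ite_eq]
    · simp [h, fun (c : Fin 2) => show ¬(X1 ω = a ∧ X2 ω = b ∧ X3 ω = c) from
        fun hc => h ⟨hc.1, hc.2.1⟩]
  rw [hswap]
  calc ∑ c : Fin 2, ∑ ω : Ω, (if X1 ω = a ∧ X2 ω = b ∧ X3 ω = c then μ ω else 0)
      = ∑ c : Fin 2, somarcPm μ X1 a * somarcPm μ X2 b * somarcPm μ X3 c :=
        Finset.sum_congr rfl fun c _ => hind a b c
    _ = somarcPm μ X1 a * somarcPm μ X2 b := by rw [← Finset.mul_sum, hs3, mul_one]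

private lemma somarc_pm_sumFin (μ : Ω → ℝ) (X1 X2 X3 : Ω → Fin 2)
    (hs3 : ∑ c : Fin 2, somarcPm μ X3 c = 1)
    (hind : IndepTriple μ X1 X2 X3) (k : Fin 3) :
    somarcPm μ (fun ω => sumFin (X1 ω) (X2 ω)) k
      = ∑ a : Fin 2, ∑ b : Fin 2,
          (if sumFin a b = k then somarcPm μ X1 a * somarcPm μ X2 b else 0) := by
  have step : ∀ ω : Ω, (if sumFin (X1 ω) (X2 ω) = k then μ ω else 0)
      = ∑ a : Fin 2, ∑ b : Fin 2,
          (if sumFin a b = k then (if X1 ω = a ∧ X2 ω = b then μ ω else 0) else 0) := by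
    intro ω
    rw [Finset.sum_eq_single (X1 ω)]
    · rw [Finset.sum_eq_single (X2 ω)]
      · simp
      · intro b _ hb
        simp [Ne.symm hb]
      · intro h; exact absurd (Finset.mem_univ _) h
    · intro a _ ha
      apply Finset.sum_eq_zero; intro b _
      have : ¬(X1 ω = a ∧ X2 ω = b) := fun hc => ha (hc.1.symm)
      simp [this]
    · intro h; exact absurd (Finset.mem_univ _) h
  unfold somarcPm
  calc (∑ ω : Ω, if sumFin (X1 ω) (X2 ω) = k then μ ω else 0)
      = ∑ ω : Ω, ∑ a : Fin 2, ∑ b : Fin 2,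
          (if sumFin a b = k then (if X1 ω = a ∧ X2 ω = b then μ ω else 0) else 0) :=
        Finset.sum_congr rfl fun ω _ => step ω
    _ = ∑ a : Fin 2, ∑ b : Fin 2, ∑ ω : Ω,
          (if sumFin a b = k then (if X1 ω = a ∧ X2 ω = b then μ ω else 0) else 0) := by
        rw [Finset.sum_comm]
        exact Finset.sum_congr rfl fun a _ => Finset.sum_comm
    _ = ∑ a : Fin 2, ∑ b : Fin 2,
          (if sumFin a b = k then somarcPm μ X1 a * somarcPm μ X2 b else 0) := by
        refine Finset.sum_congr rfl fun a _ => Finset.sum_congr rfl fun b _ => ?_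
        by_cases h : sumFin a b = k
        · simp only [h, if_true]
          exact somarc_pair_of_triple μ X1 X2 X3 hs3 hind a b
        · simp [h]

/-- The mod-2 reduction `Fin 3 → Fin 2`. -/
def somarcMod2 : Fin 3 → Fin 2 := ![0, 1, 0]

end SomarcHelpers

set_option maxHeartbeats 1000000 in
private theorem somarc_part1 : ∀ (Ω : Type) [Fintype Ω] (μ : Ω → ℝ), IsPmf μ →
    ∀ X1 X2 X3 : Ω → Fin 2, IndepTriple μ X1 X2 X3 →
      somarcMinMI Ω μ X1 X2 X3 ≤ (3 / 2) * Real.log 2 := by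
  intro Ω _ μ hμ X1 X2 X3 hind
  have hs3 : ∑ c : Fin 2, somarcPm μ X3 c = 1 := somarc_pm_sum μ hμ X3
  set p : ℝ := somarcPm μ X1 1 with hpdef
  set q : ℝ := somarcPm μ X2 1 with hqdef
  have hp0 : 0 ≤ p := somarc_pm_nonneg μ hμ X1 1
  have hp1 : p ≤ 1 := somarc_pm_le_one μ hμ X1 1
  have hq0 : 0 ≤ q := somarc_pm_nonneg μ hμ X2 1
  have hq1 : q ≤ 1 := somarc_pm_le_one μ hμ X2 1
  have hX10 : somarcPm μ X1 0 = 1 - p := by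
    have := somarc_pm_sum μ hμ X1
    rw [Fin.sum_univ_two] at this
    linarith
  have hX20 : somarcPm μ X2 0 = 1 - q := by
    have := somarc_pm_sum μ hμ X2
    rw [Fin.sum_univ_two] at this
    linarith
  -- entropy of the integer sum
  have hH : entropyOf μ (fun ω => sumFin (X1 ω) (X2 ω))
      = Real.negMulLog ((1-p)*(1-q)) + Real.negMulLog (p*(1-q)+(1-p)*q)
        + Real.negMulLog (p*q) := by
    rw [somarc_entropyOf_eq, Fin.sum_univ_three,
      somarc_pm_sumFin μ X1 X2 X3 hs3 hind 0, somarc_pm_sumFin μ X1 X2 X3 hs3 hind 1,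
      somarc_pm_sumFin μ X1 X2 X3 hs3 hind 2]
    simp only [Fin.sum_univ_two]
    norm_num [sumFin, Fin.ext_iff, hX10, hX20, ← hpdef, ← hqdef]
    ring_nf
  -- reduce the first mutual information to the entropy of the integer sum
  have hInj1 : Function.Injective
      (fun ab : Fin 2 × Fin 2 => (ab, (ab.1 + ab.2, sumFin ab.1 ab.2))) :=
    fun x y h => congrArg Prod.fst h
  have hA : entropyOf μ (fun ω => ((X1 ω, X2 ω), (X1 ω + X2 ω, sumFin (X1 ω) (X2 ω))))
      = entropyOf μ (fun ω => (X1 ω, X2 ω)) :=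
    somarc_entropy_comp_inj μ (fun ω => (X1 ω, X2 ω)) _ hInj1
  have hm : ∀ a b : Fin 2, a + b = somarcMod2 (sumFin a b) := by decide
  have hBfun : (fun ω => (X1 ω + X2 ω, sumFin (X1 ω) (X2 ω)))
      = (fun ω => (somarcMod2 (sumFin (X1 ω) (X2 ω)), sumFin (X1 ω) (X2 ω))) :=
    funext fun ω => by rw [hm]
  have hInj2 : Function.Injective (fun s : Fin 3 => (somarcMod2 s, s)) :=
    fun x y h => congrArg Prod.snd h
  have hB : entropyOf μ (fun ω => (X1 ω + X2 ω, sumFin (X1 ω) (X2 ω)))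
      = entropyOf μ (fun ω => sumFin (X1 ω) (X2 ω)) := by
    rw [hBfun]
    exact somarc_entropy_comp_inj μ (fun ω => sumFin (X1 ω) (X2 ω)) _ hInj2
  have hI : mutualInfoOf μ (fun ω => (X1 ω, X2 ω))
      (fun ω => (X1 ω + X2 ω, sumFin (X1 ω) (X2 ω)))
      = entropyOf μ (fun ω => sumFin (X1 ω) (X2 ω)) := by
    unfold mutualInfoOf
    show entropyOf μ (fun ω => (X1 ω, X2 ω))
      + entropyOf μ (fun ω => (X1 ω + X2 ω, sumFin (X1 ω) (X2 ω)))
      - entropyOf μ (fun ω => ((X1 ω, X2 ω), (X1 ω + X2 ω, sumFin (X1 ω) (X2 ω)))) = _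
    rw [hA, hB]
    ring
  calc somarcMinMI Ω μ X1 X2 X3
      ≤ mutualInfoOf μ (fun ω => (X1 ω, X2 ω))
          (fun ω => (X1 ω + X2 ω, sumFin (X1 ω) (X2 ω))) := min_le_left _ _
    _ = entropyOf μ (fun ω => sumFin (X1 ω) (X2 ω)) := hI
    _ ≤ 3/2 * Real.log 2 := by
        rw [hH]
        exact somarc_keyA hp0 hp1 hq0 hq1


/-- **Separation-based coding fails for the example SOMARC**: for every triple of mutually
independent bits `X1, X2, X3`, the cut-set/separation bound is at most `(3/2)·log 2`,
while the source entropy is `H(S1,S2) = log 3 > (3/2)·log 2`; hence `H(S1,S2)` strictly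
exceeds the maximum of the bound over product input distributions. -/
theorem separation_suboptimal_somarc :
    (∀ (Ω : Type) [Fintype Ω] (μ : Ω → ℝ), IsPmf μ →
      ∀ X1 X2 X3 : Ω → Fin 2, IndepTriple μ X1 X2 X3 →
        somarcMinMI Ω μ X1 X2 X3 ≤ (3 / 2) * Real.log 2) ∧
    entropyOf exmpSrc (fun p => p) = Real.log 3 ∧
    (3 / 2) * Real.log 2 < Real.log 3 ∧
    sSup {v : ℝ | ∃ (Ω : Type) (i : Fintype Ω) (μ : Ω → ℝ) (X1 X2 X3 : Ω → Fin 2),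
        @IsPmf Ω i μ ∧ @IndepTriple Ω (Fin 2) (Fin 2) (Fin 2) i _ _ _ μ X1 X2 X3 ∧
        v = @somarcMinMI Ω i μ X1 X2 X3}
      < Real.log 3 := by
  have h2 : entropyOf exmpSrc (fun p => p) = Real.log 3 := by
    unfold entropyOf
    simp only [Finset.sum_ite_eq']
    rw [Fintype.sum_prod_type, Fin.sum_univ_two, Fin.sum_univ_two, Fin.sum_univ_two]
    norm_num [exmpSrc, Prod.ext_iff, Fin.ext_iff, Real.negMulLog]
    rw [show (1:ℝ)/3 = (3:ℝ)⁻¹ by norm_num, Real.log_inv]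
    ring
  have h3 : (3/2 : ℝ) * Real.log 2 < Real.log 3 := by
    have h8 : Real.log 8 < Real.log 9 := Real.log_lt_log (by norm_num) (by norm_num)
    have e8 : Real.log 8 = 3 * Real.log 2 := by
      rw [show (8:ℝ) = 2^3 by norm_num, Real.log_pow]; push_cast; ring
    have e9 : Real.log 9 = 2 * Real.log 3 := by
      rw [show (9:ℝ) = 3^2 by norm_num, Real.log_pow]; push_cast; ring
    linarith
  refine ⟨somarc_part1, h2, h3, ?_⟩
  refine lt_of_le_of_lt (Real.sSup_le ?_ ?_) h3
  · rintro x ⟨Ω, i, μ, X1, X2, X3, hμ, hind, rfl⟩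
    exact somarc_part1 Ω μ hμ X1 X2 X3 hind
  · have := Real.log_nonneg (by norm_num : (1:ℝ) ≤ 2)
    linarith
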